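/- Let x = (d_E/d_S^{2k+1})(1 + y) and y = 1 − d_E/d_S^{2k+1}, and let E = (d_E² − 1)/(d_E(d_E d_S + 1)) · ((d_E² − 1)/((d_E d_S)² − 1))^k + 1/d_E. Define B = (1/2)·√(d_S^{2k+1}·E − 1) for d_E ≥ d_S^{2k+1}. Then, for fixed d_S ≥ 2 and k ≥ 0, B → 0 as d_E → ∞. -/

import Mathlib

/-!
Both factors of the purity `E` are ratios of quadratics in `d_E`, tending to `1 / d_S` and
`1 / d_S ^ 2`, while `1 / d_E → 0`; hence `d_S ^ (2k+1) · E → 1`, the radicand tends to `0`,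
and the square root is continuous.
-/

open Filter Real Topology

theorem tendsto_quadratic_div_quadratic_atTop (a b c p q r : ℝ) (hp : p ≠ 0) :
    Tendsto (fun x : ℝ => (a * x ^ 2 + b * x + c) / (p * x ^ 2 + q * x + r)) atTop
      (𝓝 (a / p)) := by
  -- divide through by `x ^ 2` and substitute `t = x⁻¹ → 0`
  let g : ℝ → ℝ := fun t => (a + b * t + c * t ^ 2) / (p + q * t + r * t ^ 2)
  have hg : ContinuousAt g 0 := by
    apply ContinuousAt.div (by fun_prop) (by fun_prop)
    simpa using hp
  have hg0 : g 0 = a / p := by simp [g]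
  refine (hg0 ▸ hg.tendsto.comp tendsto_inv_atTop_zero).congr' ?_
  filter_upwards [eventually_ne_atTop 0] with x hx
  simp only [g, Function.comp_apply]
  rw [← mul_div_mul_right _ _ (pow_ne_zero 2 hx)]
  field_simp

/-- With E(d_E) = (d_E²−1)/(d_E(d_E d_S+1))·((d_E²−1)/((d_E d_S)²−1))^k
+ 1/d_E, the Haar bound B(d_E) = (1/2)·√(d_S^{2k+1}·E(d_E) − 1) tends to 0 as
d_E → ∞, for fixed d_S ≥ 2 and k ≥ 0. -/
theorem haar_bound_vanishes_large_environment (dS : ℝ) (hdS : 2 ≤ dS) (k : ℕ) :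
    Tendsto
      (fun dE : ℝ =>
        (1 / 2) * Real.sqrt (dS ^ (2 * k + 1) *
          ((dE ^ 2 - 1) / (dE * (dE * dS + 1)) *
              ((dE ^ 2 - 1) / ((dE * dS) ^ 2 - 1)) ^ k + 1 / dE) - 1))
      atTop (nhds 0) := by
  have hdS0 : dS ≠ 0 := by positivity
  have hfirst : Tendsto (fun dE : ℝ => (dE ^ 2 - 1) / (dE * (dE * dS + 1))) atTop
      (𝓝 (1 / dS)) := by
    convert tendsto_quadratic_div_quadratic_atTop 1 0 (-1) dS 1 0 hdS0 using 2
    ring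
  have hsecond : Tendsto (fun dE : ℝ => (dE ^ 2 - 1) / ((dE * dS) ^ 2 - 1)) atTop
      (𝓝 (1 / dS ^ 2)) := by
    convert tendsto_quadratic_div_quadratic_atTop 1 0 (-1) (dS ^ 2) 0 (-1) (by positivity)
      using 2
    ring
  have hpurity := (hfirst.mul (hsecond.pow k)).add
    ((tendsto_const_nhds (x := (1 : ℝ))).div_atTop tendsto_id)
  have hradicand : dS ^ (2 * k + 1) * (1 / dS * (1 / dS ^ 2) ^ k + 0) - 1 = 0 := by
    rw [add_zero, one_div_pow, ← pow_mul, one_div_mul_one_div, ← pow_succ',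
      mul_one_div_cancel (pow_ne_zero _ hdS0), sub_self]
  have hbound := ((continuous_sqrt.tendsto _).comp
    ((hpurity.const_mul (dS ^ (2 * k + 1))).sub_const 1)).const_mul (1 / 2)
  rwa [hradicand, sqrt_zero, mul_zero] at hbound
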